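/- Let d ≥ 2 and f ∈ ℛ_d. Then every regular splitting of f takes place inside the K-subalgebra of ℛ generated by the space of (d−1)-st order partials of f: if f = g_1 + … + g_n is a regular splitting, then each additive component g_i lies in the K-subalgebra K[R_{d−1}(f)] ⊆ ℛ generated by the linear forms in R_{d−1}(f) ⊆ ℛ_1 (equivalently, R_{d−1}(g_i) ⊆ R_{d−1}(f) for every i). -/

import Mathlib

open MvPolynomial

namespace Kleppe

noncomputable section

open scoped Classical

variable {K : Type*}

/-- The iterated partial-derivative operator `∂^β` applied to `f`
(in the standard polynomial ring; char 0 identification of divided powers). -/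
def derivMulti [CommSemiring K] {r : ℕ} (β : Fin r →₀ ℕ) (f : MvPolynomial (Fin r) K) :
    MvPolynomial (Fin r) K :=
  ∑ α ∈ f.support,
    if β ≤ α then
      MvPolynomial.monomial (α - β)
        ((∏ i : Fin r, (α i).descFactorial (β i)) • MvPolynomial.coeff α f)
    else 0

/-- The apolarity action `D(f)` of a differential operator `D ∈ R = K[∂_1,…,∂_r]`
on a polynomial `f ∈ ℛ = K[x_1,…,x_r]`; `∂_i` acts as `∂/∂x_i`. -/
def contract [CommSemiring K] {r : ℕ} (D f : MvPolynomial (Fin r) K) :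
    MvPolynomial (Fin r) K :=
  ∑ β ∈ D.support, MvPolynomial.coeff β D • derivMulti β f

/-- `(A∂)_i = Σ_k A_{ik} ∂_k`, as an element of `R`. -/
def rowOp [CommSemiring K] {r : ℕ} (A : Matrix (Fin r) (Fin r) K) (i : Fin r) :
    MvPolynomial (Fin r) K :=
  ∑ k : Fin r, A i k • X k

/-- The matrix space `M_f = {A | ∂_i·(A∂)_j − ∂_j·(A∂)_i ∈ ann_R f for all i,j}`. -/
def Mf [CommRing K] {r : ℕ} (f : MvPolynomial (Fin r) K) :
    Set (Matrix (Fin r) (Fin r) K) :=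
  {A | ∀ i j : Fin r, contract (X i * rowOp A j - X j * rowOp A i) f = 0}

/-- `γ_f(A)`: the unique homogeneous `g` of degree `d` with `∂_i g = (A∂)_i (f)` for all `i`
(defined by choice; junk value `0` if no such `g` exists). -/
def gammaf [CommRing K] {r : ℕ} (d : ℕ) (f : MvPolynomial (Fin r) K)
    (A : Matrix (Fin r) (Fin r) K) : MvPolynomial (Fin r) K :=
  if h : ∃ g : MvPolynomial (Fin r) K, g.IsHomogeneous d ∧
      ∀ i, contract (X i) g = contract (rowOp A i) f then h.choose else 0

/-- `R_e(g)`, the space of contractions of `g` by homogeneous operators of degree `e`. -/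
def partials [CommRing K] {r : ℕ} (e : ℕ) (g : MvPolynomial (Fin r) K) :
    Submodule K (MvPolynomial (Fin r) K) :=
  Submodule.span K {p | ∃ D : MvPolynomial (Fin r) K, D.IsHomogeneous e ∧ p = contract D g}

/-- `G` is (the set of components of) a regular splitting of `f`:
`f = Σ_{g ∈ G} g`, each `g` a nonzero degree-`d` form, and the spaces of
`(d−1)`-st partials `R_{d−1}(g)` are independent. -/
def IsRegSplit [CommRing K] {r : ℕ} (d : ℕ) (f : MvPolynomial (Fin r) K)
    (G : Set (MvPolynomial (Fin r) K)) : Prop :=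
  G.Finite ∧ G.Nonempty ∧ (∀ g ∈ G, g ≠ 0 ∧ g.IsHomogeneous d) ∧ (∑ᶠ g ∈ G, g) = f ∧
  ∀ g ∈ G, Disjoint (partials (d - 1) g) (⨆ h ∈ G \ {g}, partials (d - 1) h)

/-- A complete set of orthogonal idempotents in `M_f`. -/
def IsCoid [CommRing K] {r : ℕ} (f : MvPolynomial (Fin r) K)
    (E : Set (Matrix (Fin r) (Fin r) K)) : Prop :=
  E.Finite ∧ E ⊆ Mf f ∧ (∀ A ∈ E, A ≠ 0) ∧
  (∀ A ∈ E, ∀ B ∈ E, A ≠ B → A * B = 0) ∧ (∑ᶠ A ∈ E, A) = 1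

end

/-! Write `∂_a h = Σ aᵢ ∂ᵢ h` for `a ∈ K^r`. For a form `h` of degree `e + 1`, the linear forms in
`R_e(h)` are exactly the `Σ vᵢ xᵢ` with `v` orthogonal to `ker ∂_h`: the coefficients of `∂_a h`
are the dot products of `a` with the catalecticant rows of `h`, which span `R_e(h)`.

Regularity gives `ker ∂_f ≤ ker ∂_g`: if `∂_a f = 0`, every `(d-2)`-nd partial of `∂_a g` lies in
`R_{d-1}(g)` and, as `∂_a g = -Σ_{h ≠ g} ∂_a h`, also in `Σ_{h ≠ g} R_{d-1}(h)`; so they all vanish,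
hence `∂_a g = 0`. Taking orthogonal complements, `R_{d-1}(g) ≤ R_{d-1}(f)`.

For the subalgebra, a form `p` of degree `n` killed by `∂_a` for all `a ∈ N` is a polynomial in the
linear forms orthogonal to `N`: with `M` the matrix of a projection with kernel `N`, Euler's identity
reads `n • p = Σ_k (Σ_i M_{ki} xᵢ) ∂ₖ p`, and the `∂ₖ p` are again such forms, of degree `n - 1`.
-/

noncomputable section

local notation:max N "ᗮ" => LinearMap.BilinForm.orthogonal (dotProductBilin _ _) N

theorem Fintype.prod_eq_mul_prod_of_forall_ne {ι M : Type*} [Fintype ι] [DecidableEq ι]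
    [CommMonoid M] {f g : ι → M} (i : ι) (c : M) (hi : f i = c * g i)
    (hne : ∀ j ≠ i, f j = g j) : ∏ j, f j = c * ∏ j, g j := by
  rw [Fintype.prod_eq_mul_prod_compl i f, Fintype.prod_eq_mul_prod_compl i g, hi, mul_assoc,
    Finset.prod_congr rfl fun j hj => hne j (Finset.mem_compl.mp hj ∘ Finset.mem_singleton.mpr)]

section DirectionalDerivative

open Matrix

variable {σ K : Type*}

theorem pderiv_pderiv_comm [CommRing K] (i j : σ) (p : MvPolynomial σ K) :
    pderiv i (pderiv j p) = pderiv j (pderiv i p) := by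
  have h : ⁅pderiv i, pderiv j⁆ = (0 : Derivation K (MvPolynomial σ K) (MvPolynomial σ K)) :=
    derivation_ext fun k => by
      classical
      rw [Derivation.commutator_apply, pderiv_X, pderiv_X, Pi.single_apply, Pi.single_apply]
      split_ifs <;> simp
  simpa [Derivation.commutator_apply, sub_eq_zero] using congr($h p)

variable [Fintype σ]

def linearForm [CommSemiring K] : (σ → K) →ₗ[K] MvPolynomial σ K :=
  Fintype.linearCombination K X

def dirDeriv [CommSemiring K] (p : MvPolynomial σ K) : (σ → K) →ₗ[K] MvPolynomial σ K :=
  Fintype.linearCombination K fun i => pderiv i p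

theorem dirDeriv_single [CommSemiring K] [DecidableEq σ] (p : MvPolynomial σ K) (i : σ) :
    dirDeriv p (Pi.single i 1) = pderiv i p := by
  rw [dirDeriv, Fintype.linearCombination_apply_single, one_smul]

theorem dirDeriv_pderiv [CommRing K] (p : MvPolynomial σ K) (i : σ) (a : σ → K) :
    dirDeriv (pderiv i p) a = pderiv i (dirDeriv p a) := by
  simp [dirDeriv, Fintype.linearCombination_apply, pderiv_pderiv_comm i]

theorem dirDeriv_finset_sum [CommSemiring K] {ι : Type*} (s : Finset ι)
    (p : ι → MvPolynomial σ K) (a : σ → K) :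
    dirDeriv (∑ h ∈ s, p h) a = ∑ h ∈ s, dirDeriv (p h) a := by
  simp only [dirDeriv, Fintype.linearCombination_apply, map_sum, Finset.smul_sum]
  exact Finset.sum_comm

theorem linearForm_injective [CommSemiring K] :
    Function.Injective (linearForm : (σ → K) →ₗ[K] MvPolynomial σ K) :=
  (linearIndependent_X σ K).fintypeLinearCombination_injective

theorem isHomogeneous_linearForm [CommSemiring K] (a : σ → K) :
    (linearForm a).IsHomogeneous 1 :=
  IsHomogeneous.sum _ _ _ fun i _ => by
    rw [smul_eq_C_mul]
    exact isHomogeneous_C_mul_X _ _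

theorem isHomogeneous_dirDeriv [CommSemiring K] {p : MvPolynomial σ K} {n : ℕ}
    (hp : p.IsHomogeneous n) (a : σ → K) : (dirDeriv p a).IsHomogeneous (n - 1) :=
  IsHomogeneous.sum _ _ _ fun i _ => by
    rw [smul_eq_C_mul]
    exact hp.pderiv.C_mul _

theorem eq_linearForm_of_isHomogeneous_one [CommSemiring K] {q : MvPolynomial σ K}
    (hq : q.IsHomogeneous 1) : q = linearForm fun i => coeff (Finsupp.single i 1) q := by
  conv_lhs => rw [← one_smul ℕ q, ← hq.sum_X_mul_pderiv]
  refine Finset.sum_congr rfl fun i _ => ?_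
  have hconst : (pderiv i q).IsHomogeneous 0 := hq.pderiv
  rw [← totalDegree_zero_iff_isHomogeneous, totalDegree_eq_zero_iff_eq_C, coeff_pderiv] at hconst
  rw [hconst, smul_eq_C_mul, mul_comm]
  simp

theorem dotProductBilin_isRefl [CommRing K] :
    LinearMap.IsRefl (dotProductBilin K K : LinearMap.BilinForm K (σ → K)) := fun v w h => by
  simpa [dotProduct_comm] using h

theorem dotProductBilin_nondegenerate [CommRing K] :
    LinearMap.BilinForm.Nondegenerate (dotProductBilin K K : LinearMap.BilinForm K (σ → K)) := by
  classical
  refine (LinearMap.IsRefl.nondegenerate_iff_separatingLeft dotProductBilin_isRefl).mpr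
    fun v hv => _root_.funext fun i => ?_
  simpa using hv (Pi.single i 1)

/-- The catalecticant rows: `rowVec p β ⬝ᵥ a` is the coefficient of `x^β` in `∂_a p`. -/
def rowVec [CommSemiring K] (p : MvPolynomial σ K) (β : σ →₀ ℕ) : σ → K :=
  fun i => coeff (β + Finsupp.single i 1) p * (β i + 1)

theorem coeff_dirDeriv [CommSemiring K] (p : MvPolynomial σ K) (a : σ → K) (β : σ →₀ ℕ) :
    coeff β (dirDeriv p a) = rowVec p β ⬝ᵥ a := by
  simp [dirDeriv, rowVec, Fintype.linearCombination_apply, coeff_sum, coeff_pderiv, dotProduct,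
    mul_comm]

theorem ker_dirDeriv [CommRing K] (p : MvPolynomial σ K) :
    LinearMap.ker (dirDeriv p) = (Submodule.span K (Set.range (rowVec p)))ᗮ := by
  ext a
  simp only [LinearMap.mem_ker, LinearMap.BilinForm.mem_orthogonal_iff]
  constructor
  · intro ha v hv
    induction hv using Submodule.span_induction with
    | mem _ hv =>
      obtain ⟨β, rfl⟩ := hv
      simpa [← coeff_dirDeriv] using congr(coeff β $ha)
    | zero => simp
    | add v w _ _ hv hw => simp [hv, hw]
    | smul c v _ hv => simp [hv]
  · intro ha
    ext β
    simpa [coeff_dirDeriv] using ha _ (Submodule.subset_span ⟨β, rfl⟩)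

theorem orthogonal_ker_dirDeriv [Field K] (p : MvPolynomial σ K) :
    (LinearMap.ker (dirDeriv p))ᗮ = Submodule.span K (Set.range (rowVec p)) := by
  rw [ker_dirDeriv]
  exact LinearMap.BilinForm.orthogonal_orthogonal dotProductBilin_nondegenerate
    (dotProductBilin_isRefl (σ := σ) (K := K)) _

theorem mem_adjoin_linearForm_of_le_ker_dirDeriv [Field K] [CharZero K]
    {N : Submodule K (σ → K)} {n : ℕ} {p : MvPolynomial σ K} (hp : p.IsHomogeneous n)
    (hN : N ≤ LinearMap.ker (dirDeriv p)) :
    p ∈ Algebra.adjoin K ((Nᗮ).map linearForm : Set _) := by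
  classical
  induction n generalizing p with
  | zero =>
    rw [← totalDegree_zero_iff_isHomogeneous, totalDegree_eq_zero_iff_eq_C] at hp
    rw [hp]
    exact Subalgebra.algebraMap_mem _ _
  | succ n ih =>
    obtain ⟨N', hN'⟩ := N.exists_isCompl
    set M := LinearMap.toMatrix' (N'.projection N hN'.symm)
    have hM : ∀ k, M k ∈ Nᗮ := fun k a ha => by
      have : M *ᵥ a = 0 := by
        rw [LinearMap.toMatrix'_mulVec, Submodule.projection_apply_eq_zero_iff]
        exact ha
      rw [dotProductBilin_apply_apply, dotProduct_comm]
      exact congr_fun this k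
    have hpderiv : ∀ i, pderiv i p = ∑ k, M k i • pderiv k p := fun i => by
      have := hN (Submodule.sub_projection_mem hN'.symm (Pi.single i 1))
      rw [LinearMap.mem_ker, map_sub, sub_eq_zero, dirDeriv_single] at this
      rw [this]
      rfl
    have heuler : ((n + 1 : ℕ) : K) • p = ∑ k, linearForm (M k) * pderiv k p := by
      calc ((n + 1 : ℕ) : K) • p = ∑ i, X i * ∑ k, M k i • pderiv k p := by
            rw [Nat.cast_smul_eq_nsmul, ← hp.sum_X_mul_pderiv]
            exact Finset.sum_congr rfl fun i _ => by rw [← hpderiv]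
        _ = ∑ k, linearForm (M k) * pderiv k p := by
            simp only [linearForm, Fintype.linearCombination_apply, Finset.mul_sum,
              Finset.sum_mul, mul_smul_comm, smul_mul_assoc]
            exact Finset.sum_comm
    have hmem : ((n + 1 : ℕ) : K) • p ∈ Algebra.adjoin K
        ((Nᗮ).map linearForm : Set _) := by
      rw [heuler]
      refine Subalgebra.sum_mem _ fun k _ => Subalgebra.mul_mem _
        (Algebra.subset_adjoin ⟨M k, hM k, rfl⟩) (ih hp.pderiv fun a ha => ?_)
      rw [LinearMap.mem_ker, dirDeriv_pderiv, LinearMap.mem_ker.mp (hN ha), map_zero]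
    have := Subalgebra.smul_mem _ hmem ((n + 1 : ℕ) : K)⁻¹
    rwa [smul_smul, inv_mul_cancel₀ (Nat.cast_ne_zero.mpr n.succ_ne_zero), one_smul] at this

end DirectionalDerivative

section Contract

variable {K : Type*} [CommSemiring K] {r : ℕ}

theorem coeff_derivMulti (β γ : Fin r →₀ ℕ) (f : MvPolynomial (Fin r) K) :
    coeff γ (derivMulti β f) =
      (∏ i, ((γ + β) i).descFactorial (β i)) • coeff (γ + β) f := by
  classical
  have hterm : ∀ α, coeff γ (if β ≤ α then
      monomial (α - β) ((∏ i, (α i).descFactorial (β i)) • coeff α f) else 0) =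
      if γ + β = α then (∏ i, ((γ + β) i).descFactorial (β i)) • coeff (γ + β) f else 0 := by
    intro α
    split_ifs with hle hα hα
    · rw [← hα, add_tsub_cancel_right, coeff_monomial, if_pos rfl]
    · rw [coeff_monomial, if_neg]
      rwa [tsub_eq_iff_eq_add_of_le hle, eq_comm]
    · exact absurd (hα ▸ le_add_self) hle
    · exact coeff_zero γ
  rw [derivMulti, coeff_sum, Finset.sum_congr rfl fun α _ => hterm α, Finset.sum_ite_eq]
  split_ifs with h
  · rfl
  · rw [notMem_support_iff.mp h, smul_zero]

theorem derivMulti_add (β : Fin r →₀ ℕ) (f g : MvPolynomial (Fin r) K) :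
    derivMulti β (f + g) = derivMulti β f + derivMulti β g := by
  ext γ
  simp [coeff_derivMulti, smul_add]

theorem derivMulti_smul (β : Fin r →₀ ℕ) (c : K) (f : MvPolynomial (Fin r) K) :
    derivMulti β (c • f) = c • derivMulti β f := by
  ext γ
  simp [coeff_derivMulti, mul_left_comm]

theorem contract_eq_sum (D f : MvPolynomial (Fin r) K) :
    contract D f = (AddMonoidAlgebra.coeff D).sum fun β c => c • derivMulti β f := by
  rw [sum_def]
  rfl

theorem contract_monomial (β : Fin r →₀ ℕ) (c : K) (f : MvPolynomial (Fin r) K) :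
    contract (monomial β c) f = c • derivMulti β f := by
  rw [contract_eq_sum, ← single_eq_monomial, AddMonoidAlgebra.coeff_single,
    Finsupp.sum_single_index (by simp)]

theorem contract_add_left (D E f : MvPolynomial (Fin r) K) :
    contract (D + E) f = contract D f + contract E f := by
  rw [contract_eq_sum, contract_eq_sum, contract_eq_sum, AddMonoidAlgebra.coeff_add]
  exact Finsupp.sum_add_index' (fun _ => zero_smul _ _) fun _ _ _ => add_smul _ _ _

theorem contract_smul_left (c : K) (D f : MvPolynomial (Fin r) K) :
    contract (c • D) f = c • contract D f := by
  rw [contract_eq_sum, contract_eq_sum, AddMonoidAlgebra.coeff_smul,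
    Finsupp.sum_smul_index' fun _ => by simp,
    Finsupp.smul_sum]
  simp [smul_smul]

theorem contract_add_right (D f g : MvPolynomial (Fin r) K) :
    contract D (f + g) = contract D f + contract D g := by
  simp [contract, derivMulti_add, Finset.sum_add_distrib]

theorem contract_smul_right (c : K) (D f : MvPolynomial (Fin r) K) :
    contract D (c • f) = c • contract D f := by
  simp [contract, derivMulti_smul, Finset.smul_sum, smul_comm _ c]

def contractBilin :
    MvPolynomial (Fin r) K →ₗ[K] MvPolynomial (Fin r) K →ₗ[K] MvPolynomial (Fin r) K :=
  LinearMap.mk₂ K contract contract_add_left contract_smul_left contract_add_right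
    contract_smul_right

theorem contractBilin_apply (D f : MvPolynomial (Fin r) K) : contractBilin D f = contract D f :=
  rfl

theorem derivMulti_pderiv (β : Fin r →₀ ℕ) (i : Fin r) (p : MvPolynomial (Fin r) K) :
    derivMulti β (pderiv i p) = derivMulti (β + Finsupp.single i 1) p := by
  classical
  ext γ
  have hprod : ∏ j, ((γ + (β + Finsupp.single i 1) : Fin r →₀ ℕ) j).descFactorial
      ((β + Finsupp.single i 1 : Fin r →₀ ℕ) j) =
        ((γ + β) i + 1) * ∏ j, ((γ + β) j).descFactorial (β j) :=
    Fintype.prod_eq_mul_prod_of_forall_ne i _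
      (by simp only [Finsupp.add_apply, Finsupp.single_eq_same, ← add_assoc,
        Nat.succ_descFactorial_succ])
      fun j hj => by simp [Finsupp.single_eq_of_ne hj]
  rw [coeff_derivMulti, coeff_pderiv, coeff_derivMulti, hprod, ← add_assoc]
  simp only [nsmul_eq_mul]
  push_cast
  ring

theorem contract_mul_X (D : MvPolynomial (Fin r) K) (i : Fin r) (p : MvPolynomial (Fin r) K) :
    contract (D * X i) p = contract D (pderiv i p) := by
  induction D using MvPolynomial.induction_on' with
  | monomial β c =>
    rw [X, monomial_mul, mul_one, contract_monomial, contract_monomial, derivMulti_pderiv]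
  | add D E hD hE => rw [add_mul, contract_add_left, contract_add_left, hD, hE]

theorem contract_dirDeriv (D p : MvPolynomial (Fin r) K) (a : Fin r → K) :
    contract D (dirDeriv p a) = contract (D * linearForm a) p := by
  simp only [dirDeriv, linearForm, Fintype.linearCombination_apply, Finset.mul_sum, mul_smul_comm]
  change contractBilin D _ = contractBilin.flip p _
  simp only [map_sum, map_smul, LinearMap.flip_apply, contractBilin_apply, contract_mul_X]

theorem isHomogeneous_derivMulti {p : MvPolynomial (Fin r) K} {n k : ℕ} (hp : p.IsHomogeneous n)
    {β : Fin r →₀ ℕ} (hβ : β.degree + k = n) : (derivMulti β p).IsHomogeneous k := by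
  intro γ hγ
  have hc : coeff (γ + β) p ≠ 0 := fun h0 => hγ (by rw [coeff_derivMulti, h0, smul_zero])
  have hdeg := hp hc
  have hβ' : Finsupp.weight 1 β = β.degree := by rw [Finsupp.degree_eq_weight_one]; rfl
  rw [map_add] at hdeg
  omega

theorem prod_descFactorial_single_add (β : Fin r →₀ ℕ) (i : Fin r) :
    ∏ j, ((Finsupp.single i 1 + β : Fin r →₀ ℕ) j).descFactorial (β j) =
      (β i + 1) * ∏ j, (β j).factorial := by
  classical
  refine Fintype.prod_eq_mul_prod_of_forall_ne i _ ?_ fun j hj => ?_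
  · have := Nat.succ_descFactorial (β i) (β i)
    rw [Nat.add_sub_cancel_left, one_mul, Nat.descFactorial_self] at this
    simpa [add_comm 1] using this
  · simp [Finsupp.single_eq_of_ne hj, Nat.descFactorial_self]

theorem derivMulti_eq_smul_linearForm {e : ℕ} {h : MvPolynomial (Fin r) K}
    (hh : h.IsHomogeneous (e + 1)) {β : Fin r →₀ ℕ} (hβ : β.degree = e) :
    derivMulti β h = ((∏ j, (β j).factorial : ℕ) : K) • linearForm (rowVec h β) := by
  rw [eq_linearForm_of_isHomogeneous_one (isHomogeneous_derivMulti hh (by omega)), ← map_smul]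
  congr 1
  funext i
  rw [coeff_derivMulti, prod_descFactorial_single_add, add_comm (Finsupp.single i 1) β]
  simp only [rowVec, Pi.smul_apply, nsmul_eq_mul, smul_eq_mul]
  push_cast
  ring

end Contract

section Apolarity

variable {K : Type*} {r : ℕ}

theorem contract_dirDeriv_mem_partials [CommRing K] {e : ℕ} {D : MvPolynomial (Fin r) K}
    (hD : D.IsHomogeneous e) (p : MvPolynomial (Fin r) K) (a : Fin r → K) :
    contract D (dirDeriv p a) ∈ partials (e + 1) p :=
  Submodule.subset_span ⟨D * linearForm a, hD.mul (isHomogeneous_linearForm a),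
    contract_dirDeriv D p a⟩

variable [Field K] [CharZero K]

theorem partials_eq_map_span_rowVec {e : ℕ} {h : MvPolynomial (Fin r) K}
    (hh : h.IsHomogeneous (e + 1)) :
    partials e h = (Submodule.span K (Set.range (rowVec h))).map linearForm := by
  rw [Submodule.map_span]
  apply le_antisymm
  · rw [partials, Submodule.span_le]
    rintro _ ⟨D, hD, rfl⟩
    refine Submodule.sum_mem _ fun β hβ => Submodule.smul_mem _ _ ?_
    have hdeg : β.degree = e := by
      by_contra hne
      exact mem_support_iff.mp hβ (hD.coeff_eq_zero hne)
    rw [derivMulti_eq_smul_linearForm hh hdeg]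
    exact Submodule.smul_mem _ _ (Submodule.subset_span ⟨_, ⟨β, rfl⟩, rfl⟩)
  · rw [Submodule.span_le]
    rintro _ ⟨_, ⟨β, rfl⟩, rfl⟩
    by_cases hβ : β.degree = e
    · have hne : ((∏ j, (β j).factorial : ℕ) : K) ≠ 0 :=
        Nat.cast_ne_zero.mpr (Finset.prod_ne_zero_iff.mpr fun j _ => Nat.factorial_ne_zero _)
      have hform : linearForm (rowVec h β) =
          ((∏ j, (β j).factorial : ℕ) : K)⁻¹ • contract (monomial β 1) h := by
        rw [contract_monomial, one_smul, derivMulti_eq_smul_linearForm hh hβ, inv_smul_smul₀ hne]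
      rw [SetLike.mem_coe, hform]
      exact Submodule.smul_mem _ _
        (Submodule.subset_span ⟨_, isHomogeneous_monomial _ hβ, rfl⟩)
    · have hrow : rowVec h β = 0 := funext fun i => by
        rw [rowVec, hh.coeff_eq_zero (by simpa using hβ), zero_mul]
        rfl
      rw [hrow, map_zero]
      exact zero_mem _

theorem partials_eq_map_orthogonal_ker_dirDeriv {e : ℕ} {h : MvPolynomial (Fin r) K}
    (hh : h.IsHomogeneous (e + 1)) :
    partials e h = ((LinearMap.ker (dirDeriv h))ᗮ).map linearForm := by
  rw [orthogonal_ker_dirDeriv, partials_eq_map_span_rowVec hh]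

theorem eq_zero_of_partials_eq_bot {e : ℕ} {h : MvPolynomial (Fin r) K}
    (hh : h.IsHomogeneous (e + 1)) (h0 : partials e h = ⊥) : h = 0 := by
  classical
  rw [partials_eq_map_span_rowVec hh, ← Submodule.map_bot linearForm] at h0
  have hrow := Submodule.map_injective_of_injective linearForm_injective h0
  have hpderiv : ∀ i, pderiv i h = 0 := fun i => by
    rw [← dirDeriv_single, ← LinearMap.mem_ker, ker_dirDeriv, hrow,
      LinearMap.BilinForm.orthogonal_bot]
    trivial
  have heuler := hh.sum_X_mul_pderiv
  simp only [hpderiv, mul_zero, Finset.sum_const_zero] at heuler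
  exact (smul_eq_zero.mp heuler.symm).resolve_left (Nat.succ_ne_zero e)

theorem ker_dirDeriv_le_of_isRegSplit {e : ℕ} {f : MvPolynomial (Fin r) K}
    {G : Set (MvPolynomial (Fin r) K)} (hG : IsRegSplit (e + 2) f G) {g : MvPolynomial (Fin r) K}
    (hg : g ∈ G) : LinearMap.ker (dirDeriv f) ≤ LinearMap.ker (dirDeriv g) := by
  classical
  obtain ⟨hfin, -, hhom, hsum, hdisj⟩ := hG
  intro a ha
  rw [LinearMap.mem_ker] at ha ⊢
  have hzero : ∀ D : MvPolynomial (Fin r) K, D.IsHomogeneous e →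
      contract D (dirDeriv g a) = 0 := by
    intro D hD
    have htotal : ∑ h ∈ hfin.toFinset, contractBilin D (dirDeriv h a) = 0 := by
      rw [← map_sum, ← dirDeriv_finset_sum,
        ← finsum_mem_eq_finite_toFinset_sum _ hfin, hsum, ha, map_zero]
    simp only [contractBilin_apply] at htotal
    rw [← Finset.add_sum_erase _ _ (hfin.mem_toFinset.mpr hg), add_eq_zero_iff_eq_neg] at htotal
    refine Submodule.disjoint_def.mp (hdisj g hg) _ (contract_dirDeriv_mem_partials hD g a) ?_
    rw [htotal]
    refine Submodule.neg_mem _ (Submodule.sum_mem _ fun h hh => ?_)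
    obtain ⟨hne, hhG⟩ := Finset.mem_erase.mp hh
    exact le_iSup₂ (f := fun h (_ : h ∈ G \ {g}) => partials (e + 1) h) h
      ⟨hfin.mem_toFinset.mp hhG, hne⟩ (contract_dirDeriv_mem_partials hD h a)
  refine eq_zero_of_partials_eq_bot (isHomogeneous_dirDeriv (hhom g hg).2 a)
    (Submodule.span_eq_bot.mpr ?_)
  rintro _ ⟨D, hD, rfl⟩
  exact hzero D hD

end Apolarity

end

/-- Corollary 2.9. For `d ≥ 2`, every regular splitting of `f ∈ ℛ_d`
takes place inside the subring `K[R_{d−1}(f)] ⊆ ℛ`: each additive component `g` lies in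
the `K`-subalgebra generated by the linear forms in `R_{d−1}(f)`, and equivalently
`R_{d−1}(g) ⊆ R_{d−1}(f)`. -/
theorem regsplit_inside_subring {K : Type*} [Field K] [CharZero K] {r d : ℕ} (hd : 2 ≤ d)
    (f : MvPolynomial (Fin r) K) (hf : f.IsHomogeneous d)
    (G : Set (MvPolynomial (Fin r) K)) (hG : IsRegSplit d f G) :
    ∀ g ∈ G,
      g ∈ Algebra.adjoin K {p : MvPolynomial (Fin r) K |
          ∃ D : MvPolynomial (Fin r) K, D.IsHomogeneous (d - 1) ∧ p = contract D f} ∧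
      partials (d - 1) g ≤ partials (d - 1) f := by
  intro g hg
  obtain ⟨e, rfl⟩ : ∃ e, d = e + 2 := ⟨d - 2, by omega⟩
  have hg_hom : g.IsHomogeneous (e + 2) := (hG.2.2.1 g hg).2
  have hker := ker_dirDeriv_le_of_isRegSplit hG hg
  have hf_partials := partials_eq_map_orthogonal_ker_dirDeriv (e := e + 1) hf
  refine ⟨Algebra.adjoin_le ?_ (mem_adjoin_linearForm_of_le_ker_dirDeriv hg_hom hker), ?_⟩
  · rw [← hf_partials]
    exact Algebra.span_le_adjoin K _
  · rw [show e + 2 - 1 = e + 1 from rfl, partials_eq_map_orthogonal_ker_dirDeriv hg_hom,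
      hf_partials]
    exact Submodule.map_mono (LinearMap.BilinForm.orthogonal_le hker)

end Kleppe
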